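/- Let α be a linear form and φ = α⁴ ∈ S⁴ (Petrov type (4)). Then conf(φ) is a complex subspace of sl₂(ℂ) of dimension 2 and aut(φ) is a complex subspace of dimension 1. -/

import Mathlib

open MvPolynomial

/-- The action of `A ∈ sl₂(ℂ)` on `ℂ[x,y]` by derivations:
`A·f = −(a x + c y) ∂f/∂x − (b x + d y) ∂f/∂y` for `A = [[a,b],[c,d]]`. -/
noncomputable def sAct (A : Matrix (Fin 2) (Fin 2) ℂ) (f : MvPolynomial (Fin 2) ℂ) :
    MvPolynomial (Fin 2) ℂ :=
  -((C (A 0 0) * X 0 + C (A 1 0) * X 1) * pderiv 0 f)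
    - ((C (A 0 1) * X 0 + C (A 1 1) * X 1) * pderiv 1 f)

/-- A linear form: a nonzero homogeneous degree-1 polynomial in `ℂ[x,y]`. -/
def IsLinForm (α : MvPolynomial (Fin 2) ℂ) : Prop := α ≠ 0 ∧ α.IsHomogeneous 1

open Matrix

/-!
Write `α = v₀ x + v₁ y`. Since `A` acts by a derivation, `A·α⁴ = 4 α³ (A·α)`, and `A·α` is the
linear form with coefficient vector `-A v`; as `ℂ[x,y]` is a domain, `A·α⁴ ∈ ℂ α⁴` iff `v` is an
eigenvector of `A`, and `A·α⁴ = 0` iff `A v = 0`. For `v ≠ 0`, the traceless matrices killing `v`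
are the multiples of the nilpotent `N = v ⊗ (-v₁, v₀)`, and those having `v` as an eigenvector are
spanned by `N` and `H = 2 v ⊗ u - 1`, where `u ⬝ v = 1`, because `A - c H` kills `v` when `A v = c v`.
-/

section LinForm

variable {σ R : Type*} [Fintype σ] [CommSemiring R]

noncomputable def linForm : (σ → R) →ₗ[R] MvPolynomial σ R := Fintype.linearCombination R X

lemma linForm_injective : Function.Injective (linForm : (σ → R) → MvPolynomial σ R) :=
  linearIndependent_iff_injective_fintypeLinearCombination.mp (linearIndependent_X σ R)

lemma exists_linForm_eq_of_isHomogeneous_one {φ : MvPolynomial σ R} (hφ : φ.IsHomogeneous 1) :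
    ∃ v, linForm v = φ := by
  have hmem : φ ∈ homogeneousSubmodule σ R 1 := hφ
  rwa [homogeneousSubmodule_one_eq_span_X, ← Fintype.range_linearCombination] at hmem

lemma pderiv_linForm [DecidableEq σ] (v : σ → R) (i : σ) : pderiv i (linForm v) = C (v i) := by
  simp [linForm, Fintype.linearCombination_apply, pderiv_X, Pi.single_apply, smul_eq_C_mul]

end LinForm

lemma IsLinForm.exists_linForm_eq {α : MvPolynomial (Fin 2) ℂ} (hα : IsLinForm α) :
    ∃ v ≠ 0, linForm v = α := by
  obtain ⟨v, rfl⟩ := exists_linForm_eq_of_isHomogeneous_one hα.2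
  exact ⟨v, by rintro rfl; exact hα.1 (map_zero _), rfl⟩

lemma sAct_pow (A : Matrix (Fin 2) (Fin 2) ℂ) (f : MvPolynomial (Fin 2) ℂ) (n : ℕ) :
    sAct A (f ^ n) = n * f ^ (n - 1) * sAct A f := by
  simp only [sAct, pderiv_pow]
  ring

lemma sAct_linForm (A : Matrix (Fin 2) (Fin 2) ℂ) (v : Fin 2 → ℂ) :
    sAct A (linForm v) = -linForm (A *ᵥ v) := by
  rw [sAct, pderiv_linForm, pderiv_linForm]
  simp only [linForm, Fintype.linearCombination_apply, Fin.sum_univ_two, mulVec_fin_two,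
    smul_eq_C_mul, cons_val_zero, cons_val_one, cons_val_fin_one, C_add, C_mul]
  ring

lemma sAct_linForm_pow_succ (A : Matrix (Fin 2) (Fin 2) ℂ) (v : Fin 2 → ℂ) (n : ℕ) :
    sAct A (linForm v ^ (n + 1)) = linForm v ^ n * linForm (-((n + 1 : ℂ) • A *ᵥ v)) := by
  rw [sAct_pow, sAct_linForm, map_neg, map_smul, smul_eq_C_mul, Nat.add_sub_cancel,
    ← Nat.cast_add_one, map_natCast]
  ring

lemma sAct_linForm_pow_succ_eq_smul_iff {v : Fin 2 → ℂ} (hv : v ≠ 0) (n : ℕ)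
    (A : Matrix (Fin 2) (Fin 2) ℂ) (c : ℂ) :
    sAct A (linForm v ^ (n + 1)) = c • linForm v ^ (n + 1) ↔ A *ᵥ v = (-c / (n + 1)) • v := by
  have hpow : linForm v ^ n ≠ 0 := pow_ne_zero _ ((map_ne_zero_iff _ linForm_injective).mpr hv)
  have hn : (n + 1 : ℂ) ≠ 0 := Nat.cast_add_one_ne_zero n
  rw [sAct_linForm_pow_succ, pow_succ, ← mul_smul_comm, ← map_smul, mul_right_inj' hpow,
    linForm_injective.eq_iff, neg_eq_iff_eq_neg, ← neg_smul, ← eq_inv_smul_iff₀ hn, smul_smul,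
    inv_mul_eq_div]

lemma exists_sAct_linForm_pow_succ_eq_smul_iff {v : Fin 2 → ℂ} (hv : v ≠ 0) (n : ℕ)
    (A : Matrix (Fin 2) (Fin 2) ℂ) :
    (∃ c : ℂ, sAct A (linForm v ^ (n + 1)) = c • linForm v ^ (n + 1)) ↔ ∃ c : ℂ, A *ᵥ v = c • v := by
  have hn : (n + 1 : ℂ) ≠ 0 := Nat.cast_add_one_ne_zero n
  simp only [sAct_linForm_pow_succ_eq_smul_iff hv]
  refine ⟨fun ⟨c, hc⟩ ↦ ⟨_, hc⟩, fun ⟨c, hc⟩ ↦ ⟨-((n + 1) * c), ?_⟩⟩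
  rwa [neg_neg, mul_div_cancel_left₀ _ hn]

lemma sAct_linForm_pow_succ_eq_zero_iff {v : Fin 2 → ℂ} (hv : v ≠ 0) (n : ℕ)
    (A : Matrix (Fin 2) (Fin 2) ℂ) :
    sAct A (linForm v ^ (n + 1)) = 0 ↔ A *ᵥ v = 0 := by
  simpa using sAct_linForm_pow_succ_eq_smul_iff hv n A 0

section LineStabilizer

variable {K : Type*} [Field K]

lemma exists_dotProduct_eq_one {n : Type*} [Fintype n] {v : n → K} (hv : v ≠ 0) :
    ∃ u, u ⬝ᵥ v = 1 := by
  classical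
  obtain ⟨i, hi⟩ := Function.ne_iff.mp hv
  exact ⟨Pi.single i (v i)⁻¹, by rw [single_dotProduct, inv_mul_cancel₀ hi]⟩

def nilpotentOfVec (v : Fin 2 → K) : Matrix (Fin 2) (Fin 2) K := vecMulVec v ![-v 1, v 0]

variable {v : Fin 2 → K}

lemma nilpotentOfVec_mulVec_self : nilpotentOfVec v *ᵥ v = 0 := by
  have h : ![-v 1, v 0] ⬝ᵥ v = 0 := by
    rw [dotProduct, Fin.sum_univ_two]
    simp only [cons_val_zero, cons_val_one, cons_val_fin_one]
    ring
  rw [nilpotentOfVec, vecMulVec_mulVec, h, MulOpposite.op_zero, zero_smul]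

lemma trace_nilpotentOfVec : (nilpotentOfVec v).trace = 0 := by
  rw [nilpotentOfVec, trace_vecMulVec, dotProduct, Fin.sum_univ_two]
  simp only [cons_val_zero, cons_val_one, cons_val_fin_one]
  ring

lemma nilpotentOfVec_ne_zero (hv : v ≠ 0) : nilpotentOfVec v ≠ 0 := by
  rw [nilpotentOfVec, Ne, vecMulVec_eq_zero, not_or]
  refine ⟨hv, fun h ↦ hv ?_⟩
  ext i
  fin_cases i
  · simpa using congrFun h 1
  · simpa using congrFun h 0

lemma mem_span_nilpotentOfVec_iff (hv : v ≠ 0) (A : Matrix (Fin 2) (Fin 2) K) :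
    A ∈ K ∙ nilpotentOfVec v ↔ A.trace = 0 ∧ A *ᵥ v = 0 := by
  rw [Submodule.mem_span_singleton]
  constructor
  · rintro ⟨t, rfl⟩
    exact ⟨by rw [trace_smul, trace_nilpotentOfVec, smul_zero],
      by rw [smul_mulVec, nilpotentOfVec_mulVec_self, smul_zero]⟩
  · rintro ⟨htr, hAv⟩
    obtain ⟨u, hu⟩ := exists_dotProduct_eq_one hv
    rw [trace_fin_two] at htr
    rw [dotProduct, Fin.sum_univ_two] at hu
    have h0 : A 0 0 * v 0 + A 0 1 * v 1 = 0 := by simpa [mulVec_fin_two] using congrFun hAv 0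
    have h1 : A 1 0 * v 0 + A 1 1 * v 1 = 0 := by simpa [mulVec_fin_two] using congrFun hAv 1
    clear hAv hv
    -- If `A = a • N`, expanding `a = a * (u ⬝ᵥ v) ^ 2` expresses `a` through the entries of `A`.
    refine ⟨u 0 ^ 2 * A 0 1 - 2 * u 0 * u 1 * A 0 0 - u 1 ^ 2 * A 1 0, ?_⟩
    ext i j
    fin_cases i <;> fin_cases j <;>
      simp only [nilpotentOfVec, Matrix.smul_apply, vecMulVec_apply, smul_eq_mul, Fin.zero_eta,
        Fin.mk_one, cons_val_zero, cons_val_one, cons_val_fin_one] <;> grind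

def semisimpleOfVec (v u : Fin 2 → K) : Matrix (Fin 2) (Fin 2) K := (2 : K) • vecMulVec v u - 1

variable {u : Fin 2 → K}

lemma semisimpleOfVec_mulVec_self (hu : u ⬝ᵥ v = 1) : semisimpleOfVec v u *ᵥ v = v := by
  rw [semisimpleOfVec, sub_mulVec, smul_mulVec, vecMulVec_mulVec, hu, one_mulVec]
  simp only [MulOpposite.op_one, one_smul]
  module

lemma trace_semisimpleOfVec (hu : u ⬝ᵥ v = 1) : (semisimpleOfVec v u).trace = 0 := by
  rw [semisimpleOfVec, trace_sub, trace_smul, trace_vecMulVec, dotProduct_comm, hu, trace_one,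
    Fintype.card_fin]
  norm_num

lemma mem_span_semisimpleOfVec_nilpotentOfVec_iff (hv : v ≠ 0) (hu : u ⬝ᵥ v = 1)
    (A : Matrix (Fin 2) (Fin 2) K) :
    A ∈ Submodule.span K {semisimpleOfVec v u, nilpotentOfVec v} ↔
      A.trace = 0 ∧ ∃ c : K, A *ᵥ v = c • v := by
  rw [Submodule.mem_span_pair]
  constructor
  · rintro ⟨c, t, rfl⟩
    refine ⟨?_, c, ?_⟩
    · rw [trace_add, trace_smul, trace_smul, trace_semisimpleOfVec hu, trace_nilpotentOfVec]
      simp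
    · rw [add_mulVec, smul_mulVec, smul_mulVec, semisimpleOfVec_mulVec_self hu,
        nilpotentOfVec_mulVec_self, smul_zero, add_zero]
  · rintro ⟨htr, c, hc⟩
    have hrest : A - c • semisimpleOfVec v u ∈ K ∙ nilpotentOfVec v := by
      rw [mem_span_nilpotentOfVec_iff hv, trace_sub, trace_smul, trace_semisimpleOfVec hu,
        sub_mulVec, smul_mulVec, semisimpleOfVec_mulVec_self hu, hc]
      simp [htr]
    obtain ⟨t, ht⟩ := Submodule.mem_span_singleton.mp hrest
    exact ⟨c, t, by rw [ht, add_sub_cancel]⟩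

lemma linearIndependent_semisimpleOfVec_nilpotentOfVec (hv : v ≠ 0) (hu : u ⬝ᵥ v = 1) :
    LinearIndependent K ![semisimpleOfVec v u, nilpotentOfVec v] := by
  rw [LinearIndependent.pair_iff]
  intro c t h
  have hc : c • v = 0 := by
    have hv' := congrArg (· *ᵥ v) h
    rwa [add_mulVec, smul_mulVec, smul_mulVec, semisimpleOfVec_mulVec_self hu,
      nilpotentOfVec_mulVec_self, smul_zero, add_zero, zero_mulVec] at hv'
  obtain rfl : c = 0 := (smul_eq_zero.mp hc).resolve_right hv
  rw [zero_smul, zero_add, smul_eq_zero] at h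
  exact ⟨rfl, h.resolve_right (nilpotentOfVec_ne_zero hv)⟩

lemma exists_finrank_eq_one_setOf_traceless_mulVec_eq_zero (hv : v ≠ 0) :
    ∃ S : Submodule K (Matrix (Fin 2) (Fin 2) K),
      (S : Set (Matrix (Fin 2) (Fin 2) K)) = {A | A.trace = 0 ∧ A *ᵥ v = 0} ∧
      Module.finrank K S = 1 :=
  ⟨K ∙ nilpotentOfVec v, Set.ext (mem_span_nilpotentOfVec_iff hv),
    finrank_span_singleton (nilpotentOfVec_ne_zero hv)⟩

lemma exists_finrank_eq_two_setOf_traceless_mulVec_eq_smul (hv : v ≠ 0) :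
    ∃ S : Submodule K (Matrix (Fin 2) (Fin 2) K),
      (S : Set (Matrix (Fin 2) (Fin 2) K)) = {A | A.trace = 0 ∧ ∃ c : K, A *ᵥ v = c • v} ∧
      Module.finrank K S = 2 := by
  obtain ⟨u, hu⟩ := exists_dotProduct_eq_one hv
  refine ⟨Submodule.span K {semisimpleOfVec v u, nilpotentOfVec v},
    Set.ext (mem_span_semisimpleOfVec_nilpotentOfVec_iff hv hu), ?_⟩
  have h := finrank_span_eq_card (linearIndependent_semisimpleOfVec_nilpotentOfVec hv hu)
  rwa [range_cons, range_cons, range_empty, Set.union_empty, Set.singleton_union,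
    Fintype.card_fin] at h

end LineStabilizer

/-- Petrov type (4)=(N): for `φ = α⁴` with `α` a linear form, `conf(φ)` is a
2-dimensional and `aut(φ)` a 1-dimensional complex subspace of `sl₂(ℂ)`. -/
theorem aut_conf_type_N (α : MvPolynomial (Fin 2) ℂ) (hα : IsLinForm α) :
    (∃ S : Submodule ℂ (Matrix (Fin 2) (Fin 2) ℂ),
      (S : Set (Matrix (Fin 2) (Fin 2) ℂ)) =
        {A | A.trace = 0 ∧ ∃ c : ℂ, sAct A (α ^ 4) = c • (α ^ 4)} ∧
      Module.finrank ℂ S = 2) ∧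
    ∃ S : Submodule ℂ (Matrix (Fin 2) (Fin 2) ℂ),
      (S : Set (Matrix (Fin 2) (Fin 2) ℂ)) =
        {A | A.trace = 0 ∧ sAct A (α ^ 4) = 0} ∧
      Module.finrank ℂ S = 1 := by
  obtain ⟨v, hv, rfl⟩ := hα.exists_linForm_eq
  simp only [exists_sAct_linForm_pow_succ_eq_smul_iff hv 3,
    sAct_linForm_pow_succ_eq_zero_iff hv 3]
  exact ⟨exists_finrank_eq_two_setOf_traceless_mulVec_eq_smul hv,
    exists_finrank_eq_one_setOf_traceless_mulVec_eq_zero hv⟩
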